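/- Let ρ: Γ → SO₀(2,n+1) be a representation with acausal equivariant limit map ξ: ∂Γ → ∂ℍ^{2,n} (meaning every triple of distinct points is sent to isotropic lines spanning a subspace of signature (2,1)). Then the function β^ρ(u,v,w,z) = Sgn(u,v,w,z)·(⟨ξ(u),ξ(w)⟩⟨ξ(v),ξ(z)⟩ / (⟨ξ(u),ξ(z)⟩⟨ξ(v),ξ(w)⟩))^{1/2} is strictly positive: for every 4-tuple of distinct cyclically ordered points u, v, w, z ∈ ∂Γ, β^ρ(u,v,w,z) > 1. -/
import Mathlib

set_option maxHeartbeats 1000000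


/-- The signature `(2, n+1)` bilinear form on `ℝ^{n+3}`. -/
noncomputable def bform (n : ℕ) (x y : Fin (n + 3) → ℝ) : ℝ :=
  ∑ i : Fin (n + 3), (if (i : ℕ) < 2 then (1 : ℝ) else -1) * (x i * y i)

/-- The subspace spanned by `{x, y, z}` has signature `(2,1)`: it is spanned by an
orthogonal basis with two vectors of norm `1` and one of norm `-1`. -/
def SpanSig21 (n : ℕ) (x y z : Fin (n + 3) → ℝ) : Prop :=
  ∃ b₁ b₂ b₃ : Fin (n + 3) → ℝ,
    Submodule.span ℝ ({x, y, z} : Set (Fin (n + 3) → ℝ)) =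
      Submodule.span ℝ ({b₁, b₂, b₃} : Set (Fin (n + 3) → ℝ)) ∧
    bform n b₁ b₁ = 1 ∧ bform n b₂ b₂ = 1 ∧ bform n b₃ b₃ = -1 ∧
    bform n b₁ b₂ = 0 ∧ bform n b₁ b₃ = 0 ∧ bform n b₂ b₃ = 0

/-- The cross ratio `β^ρ` of a maximal representation, expressed in terms of the limit map
`ξ` (here parametrized in an affine chart `ℝ ⊂ ∂Γ ≅ ℝP¹`, so that the sign
`Sgn(u,v,w,z)` is the sign of the standard projective cross ratio of the parameters):
`β^ρ(u,v,w,z) = Sgn(u,v,w,z)·(⟨ξu,ξw⟩⟨ξv,ξz⟩/(⟨ξu,ξz⟩⟨ξv,ξw⟩))^{1/2}`. -/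
noncomputable def betaRho (n : ℕ) (ξ : ℝ → (Fin (n + 3) → ℝ)) (u v w z : ℝ) : ℝ :=
  Real.sign (((u - w) * (v - z)) / ((u - z) * (v - w))) *
    Real.sqrt ((bform n (ξ u) (ξ w) * bform n (ξ v) (ξ z)) /
      (bform n (ξ u) (ξ z) * bform n (ξ v) (ξ w)))

/-! ### Auxiliary lemmas -/

section Aux

lemma bform_comm (n : ℕ) (x y : Fin (n + 3) → ℝ) : bform n x y = bform n y x := by
  unfold bform; exact Finset.sum_congr rfl fun i _ => by ring

lemma bform_add_left (n : ℕ) (x y z : Fin (n + 3) → ℝ) :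
    bform n (x + y) z = bform n x z + bform n y z := by
  unfold bform
  rw [← Finset.sum_add_distrib]
  exact Finset.sum_congr rfl fun i _ => by simp only [Pi.add_apply]; ring

lemma bform_smul_left (n : ℕ) (a : ℝ) (x y : Fin (n + 3) → ℝ) :
    bform n (a • x) y = a * bform n x y := by
  unfold bform
  rw [Finset.mul_sum]
  exact Finset.sum_congr rfl fun i _ => by
    simp only [Pi.smul_apply, smul_eq_mul]; ring

lemma bform_sub_left (n : ℕ) (x y z : Fin (n + 3) → ℝ) :
    bform n (x - y) z = bform n x z - bform n y z := by
  unfold bform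
  rw [← Finset.sum_sub_distrib]
  exact Finset.sum_congr rfl fun i _ => by simp only [Pi.sub_apply]; ring

lemma bform_add_right (n : ℕ) (x y z : Fin (n + 3) → ℝ) :
    bform n x (y + z) = bform n x y + bform n x z := by
  rw [bform_comm n x (y + z), bform_add_left, bform_comm n y x, bform_comm n z x]

lemma bform_smul_right (n : ℕ) (a : ℝ) (x y : Fin (n + 3) → ℝ) :
    bform n x (a • y) = a * bform n x y := by
  rw [bform_comm n x (a • y), bform_smul_left, bform_comm n y x]

lemma bform_sub_right (n : ℕ) (x y z : Fin (n + 3) → ℝ) :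
    bform n x (y - z) = bform n x y - bform n x z := by
  rw [bform_comm n x (y - z), bform_sub_left, bform_comm n y x, bform_comm n z x]

lemma bform_combo3 (n : ℕ) (b₁ b₂ b₃ : Fin (n + 3) → ℝ)
    (g11 : bform n b₁ b₁ = 1) (g22 : bform n b₂ b₂ = 1) (g33 : bform n b₃ b₃ = -1)
    (g12 : bform n b₁ b₂ = 0) (g13 : bform n b₁ b₃ = 0) (g23 : bform n b₂ b₃ = 0)
    (p₁ p₂ p₃ q₁ q₂ q₃ : ℝ) :
    bform n (p₁ • b₁ + p₂ • b₂ + p₃ • b₃) (q₁ • b₁ + q₂ • b₂ + q₃ • b₃) =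
      p₁ * q₁ + p₂ * q₂ - p₃ * q₃ := by
  have g21 : bform n b₂ b₁ = 0 := (bform_comm n b₂ b₁).trans g12
  have g31 : bform n b₃ b₁ = 0 := (bform_comm n b₃ b₁).trans g13
  have g32 : bform n b₃ b₂ = 0 := (bform_comm n b₃ b₂).trans g23
  simp only [bform_add_left, bform_add_right, bform_smul_left, bform_smul_right,
    g11, g22, g33, g12, g13, g23, g21, g31, g32]
  ring

lemma mem_span_triple' {n : ℕ} {x y z v : Fin (n + 3) → ℝ}
    (h : v ∈ Submodule.span ℝ ({x, y, z} : Set (Fin (n + 3) → ℝ))) :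
    ∃ a b c : ℝ, v = a • x + b • y + c • z := by
  rw [Submodule.mem_span_insert] at h
  obtain ⟨a, w, hw, rfl⟩ := h
  obtain ⟨b, c, rfl⟩ := Submodule.mem_span_pair.mp hw
  exact ⟨a, b, c, by abel⟩

lemma bform_decomp (n : ℕ) (x y : Fin (n + 3) → ℝ) :
    bform n x y = x 0 * y 0 + x 1 * y 1
      - ∑ i : Fin (n + 1), x i.succ.succ * y i.succ.succ := by
  unfold bform
  rw [Fin.sum_univ_succ, Fin.sum_univ_succ]
  have h0 : (((0 : Fin (n + 3)) : ℕ)) < 2 := by norm_num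
  have h1 : ((Fin.succ (0 : Fin (n + 2)) : Fin (n + 3)) : ℕ) < 2 := by
    simp [Fin.val_succ]
  rw [if_pos h0, if_pos h1]
  have key : ∀ i : Fin (n + 1),
      (if ((i.succ.succ : Fin (n + 3)) : ℕ) < 2 then (1 : ℝ) else -1) *
        (x i.succ.succ * y i.succ.succ) = -(x i.succ.succ * y i.succ.succ) := by
    intro i
    rw [if_neg]; · ring
    · simp [Fin.val_succ]
  rw [Finset.sum_congr rfl fun i _ => key i, Finset.sum_neg_distrib,
    Fin.succ_zero_eq_one']
  ring

/-- There are no three pairwise-orthogonal vectors of positive `bform`-norm. -/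
lemma no_pos_three (n : ℕ) (w₁ w₂ w₃ : Fin (n + 3) → ℝ)
    (q1 : 0 < bform n w₁ w₁) (q2 : 0 < bform n w₂ w₂) (q3 : 0 < bform n w₃ w₃)
    (o12 : bform n w₁ w₂ = 0) (o13 : bform n w₁ w₃ = 0) (o23 : bform n w₂ w₃ = 0) :
    False := by
  set T : (Fin (n + 3) → ℝ) → (Fin (n + 3) → ℝ) → ℝ :=
    fun x y => ∑ i : Fin (n + 1), x i.succ.succ * y i.succ.succ with hT
  have hd : ∀ x y, bform n x y = x 0 * y 0 + x 1 * y 1 - T x y := fun x y =>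
    bform_decomp n x y
  have hCS : ∀ x y, (T x y) ^ 2 ≤ T x x * T y y := by
    intro x y
    have h := Finset.sum_mul_sq_le_sq_mul_sq Finset.univ
      (fun i : Fin (n + 1) => x i.succ.succ) (fun i : Fin (n + 1) => y i.succ.succ)
    have e1 : ∑ i : Fin (n + 1), (x i.succ.succ) ^ 2 = T x x := by
      simp [hT, pow_two]
    have e2 : ∑ i : Fin (n + 1), (y i.succ.succ) ^ 2 = T y y := by
      simp [hT, pow_two]
    rw [e1, e2] at h
    exact h
  have hTnn : ∀ x, 0 ≤ T x x := fun x =>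
    Finset.sum_nonneg fun i _ => mul_self_nonneg _
  set a₁ := w₁ 0; set b₁ := w₁ 1
  set a₂ := w₂ 0; set b₂ := w₂ 1
  set a₃ := w₃ 0; set b₃ := w₃ 1
  have e12 : a₁ * a₂ + b₁ * b₂ = T w₁ w₂ := by have := hd w₁ w₂; rw [o12] at this; linarith
  have e13 : a₁ * a₃ + b₁ * b₃ = T w₁ w₃ := by have := hd w₁ w₃; rw [o13] at this; linarith
  have e23 : a₂ * a₃ + b₂ * b₃ = T w₂ w₃ := by have := hd w₂ w₃; rw [o23] at this; linarith
  have e11 : a₁ ^ 2 + b₁ ^ 2 = T w₁ w₁ + bform n w₁ w₁ := by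
    have := hd w₁ w₁; nlinarith [this]
  have e22 : a₂ ^ 2 + b₂ ^ 2 = T w₂ w₂ + bform n w₂ w₂ := by
    have := hd w₂ w₂; nlinarith [this]
  set d₁ := a₂ * b₃ - a₃ * b₂ with hd₁
  set d₂ := a₁ * b₃ - a₃ * b₁ with hd₂
  set d₃ := a₁ * b₂ - a₂ * b₁ with hd₃
  have hd3ne : d₃ ≠ 0 := by
    intro h
    have h' : a₁ * b₂ - a₂ * b₁ = 0 := by rw [← hd₃]; exact h
    have lag : (a₁ * a₂ + b₁ * b₂) ^ 2 = (a₁ ^ 2 + b₁ ^ 2) * (a₂ ^ 2 + b₂ ^ 2) := by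
      linear_combination (a₂ * b₁ - a₁ * b₂) * h'
    have hcs := hCS w₁ w₂
    have key : (T w₁ w₂) ^ 2 =
        (T w₁ w₁ + bform n w₁ w₁) * (T w₂ w₂ + bform n w₂ w₂) := by
      rw [← e11, ← e22, ← e12]; exact lag
    nlinarith [key, hcs, hTnn w₁, hTnn w₂, q1, q2, mul_pos q1 q2,
      mul_nonneg (hTnn w₁) q2.le, mul_nonneg q1.le (hTnn w₂)]
  set uu : Fin (n + 3) → ℝ := d₁ • w₁ - d₂ • w₂ + d₃ • w₃ with huu
  have hu0 : uu 0 = 0 := by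
    simp only [huu, Pi.add_apply, Pi.sub_apply, Pi.smul_apply, smul_eq_mul]
    simp only [hd₁, hd₂, hd₃]
    ring
  have hu1 : uu 1 = 0 := by
    simp only [huu, Pi.add_apply, Pi.sub_apply, Pi.smul_apply, smul_eq_mul]
    simp only [hd₁, hd₂, hd₃]
    ring
  have o21 : bform n w₂ w₁ = 0 := (bform_comm n w₂ w₁).trans o12
  have o31 : bform n w₃ w₁ = 0 := (bform_comm n w₃ w₁).trans o13
  have o32 : bform n w₃ w₂ = 0 := (bform_comm n w₃ w₂).trans o23
  have expand : bform n uu uu =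
      d₁ ^ 2 * bform n w₁ w₁ + d₂ ^ 2 * bform n w₂ w₂ + d₃ ^ 2 * bform n w₃ w₃ := by
    simp only [huu, bform_add_left, bform_add_right, bform_sub_left, bform_sub_right,
      bform_smul_left, bform_smul_right, o12, o13, o23, o21, o31, o32]
    ring
  have hd3sq : 0 < d₃ ^ 2 := lt_of_le_of_ne (sq_nonneg d₃) (Ne.symm (pow_ne_zero 2 hd3ne))
  have hpos : 0 < bform n uu uu := by
    rw [expand]
    nlinarith [mul_nonneg (sq_nonneg d₁) q1.le, mul_nonneg (sq_nonneg d₂) q2.le,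
      mul_pos hd3sq q3]
  have hnonpos : bform n uu uu ≤ 0 := by
    have := hd uu uu
    rw [hu0, hu1] at this
    have := hTnn uu
    linarith [hd uu uu, hTnn uu]
  linarith

/-- A spacelike vector cannot be orthogonal to the images of three distinct points. -/
lemma no_three_zeros (n : ℕ) (ξ : ℝ → (Fin (n + 3) → ℝ))
    (hacausal : ∀ t₁ t₂ t₃ : ℝ, t₁ ≠ t₂ → t₁ ≠ t₃ → t₂ ≠ t₃ →
      SpanSig21 n (ξ t₁) (ξ t₂) (ξ t₃))
    (η : Fin (n + 3) → ℝ) (hη : 0 < bform n η η)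
    (t₁ t₂ t₃ : ℝ) (h12 : t₁ ≠ t₂) (h13 : t₁ ≠ t₃) (h23 : t₂ ≠ t₃)
    (z₁ : bform n η (ξ t₁) = 0) (z₂ : bform n η (ξ t₂) = 0)
    (z₃ : bform n η (ξ t₃) = 0) : False := by
  obtain ⟨b₁, b₂, b₃, hspan, g11, g22, g33, g12, g13, g23⟩ := hacausal t₁ t₂ t₃ h12 h13 h23
  have hb1 : b₁ ∈ Submodule.span ℝ ({ξ t₁, ξ t₂, ξ t₃} : Set (Fin (n + 3) → ℝ)) := by
    rw [hspan]; exact Submodule.subset_span (by simp)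
  have hb2 : b₂ ∈ Submodule.span ℝ ({ξ t₁, ξ t₂, ξ t₃} : Set (Fin (n + 3) → ℝ)) := by
    rw [hspan]; exact Submodule.subset_span (by simp)
  obtain ⟨α₁, α₂, α₃, hb1e⟩ := mem_span_triple' hb1
  obtain ⟨β₁, β₂, β₃, hb2e⟩ := mem_span_triple' hb2
  have hz1 : bform n η b₁ = 0 := by
    rw [hb1e]
    simp only [bform_add_right, bform_smul_right, z₁, z₂, z₃]
    ring
  have hz2 : bform n η b₂ = 0 := by
    rw [hb2e]
    simp only [bform_add_right, bform_smul_right, z₁, z₂, z₃]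
    ring
  exact no_pos_three n b₁ b₂ η (by rw [g11]; norm_num) (by rw [g22]; norm_num) hη
    g12 (by rw [bform_comm n b₁ η]; exact hz1)
    (by rw [bform_comm n b₂ η]; exact hz2)

/-- Nondegeneracy: the form does not vanish on pairs of distinct points. -/
lemma f_ne (n : ℕ) (ξ : ℝ → (Fin (n + 3) → ℝ))
    (hiso : ∀ t, bform n (ξ t) (ξ t) = 0) (hne : ∀ t, ξ t ≠ 0)
    (hacausal : ∀ t₁ t₂ t₃ : ℝ, t₁ ≠ t₂ → t₁ ≠ t₃ → t₂ ≠ t₃ →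
      SpanSig21 n (ξ t₁) (ξ t₂) (ξ t₃))
    (s t : ℝ) (hst : s ≠ t) : bform n (ξ s) (ξ t) ≠ 0 := by
  intro hf0
  set r : ℝ := max s t + 1 with hr
  have hsr : s ≠ r := by
    have := le_max_left s t; intro h; rw [← h] at hr; nlinarith [le_max_left s t]
  have htr : t ≠ r := by
    intro h; rw [← h] at hr; nlinarith [le_max_right s t]
  obtain ⟨b₁, b₂, b₃, hspan, g11, g22, g33, g12, g13, g23⟩ := hacausal s t r hst hsr htr
  have combo := bform_combo3 n b₁ b₂ b₃ g11 g22 g33 g12 g13 g23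
  have hxs : ξ s ∈ Submodule.span ℝ ({b₁, b₂, b₃} : Set (Fin (n + 3) → ℝ)) := by
    rw [← hspan]; exact Submodule.subset_span (by simp)
  have hxt : ξ t ∈ Submodule.span ℝ ({b₁, b₂, b₃} : Set (Fin (n + 3) → ℝ)) := by
    rw [← hspan]; exact Submodule.subset_span (by simp)
  obtain ⟨a₁, a₂, a₃, ha⟩ := mem_span_triple' hxs
  obtain ⟨c₁, c₂, c₃, hc⟩ := mem_span_triple' hxt
  have hqa : a₁ ^ 2 + a₂ ^ 2 = a₃ ^ 2 := by
    have h := hiso s; rw [ha, combo] at h; linear_combination h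
  have hqc : c₁ ^ 2 + c₂ ^ 2 = c₃ ^ 2 := by
    have h := hiso t; rw [hc, combo] at h; linear_combination h
  have hf : a₁ * c₁ + a₂ * c₂ - a₃ * c₃ = 0 := by
    rw [ha, hc, combo] at hf0; exact hf0
  have hc3 : c₃ ≠ 0 := by
    intro h
    have h1 : c₁ = 0 := by nlinarith [sq_nonneg c₁, sq_nonneg c₂]
    have h2 : c₂ = 0 := by nlinarith [sq_nonneg c₁, sq_nonneg c₂]
    apply hne t
    rw [hc, h, h1, h2]
    simp
  have hcross : a₁ * c₂ - a₂ * c₁ = 0 := by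
    have h2 : (a₁ * c₂ - a₂ * c₁) ^ 2 = 0 := by
      linear_combination (c₁ ^ 2 + c₂ ^ 2) * hqa + a₃ ^ 2 * hqc -
        (a₁ * c₁ + a₂ * c₂ + a₃ * c₃) * hf
    exact sq_eq_zero_iff.mp h2
  have ea1 : a₁ * c₃ = a₃ * c₁ := by
    have h3 : (a₁ * c₃) * c₃ = (a₃ * c₁) * c₃ := by
      linear_combination c₁ * hf + c₂ * hcross - a₁ * hqc
    exact mul_right_cancel₀ hc3 h3
  have ea2 : a₂ * c₃ = a₃ * c₂ := by
    have h3 : (a₂ * c₃) * c₃ = (a₃ * c₂) * c₃ := by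
      linear_combination c₂ * hf - c₁ * hcross - a₂ * hqc
    exact mul_right_cancel₀ hc3 h3
  have hprop : c₃ • ξ s = a₃ • ξ t := by
    rw [ha, hc]
    simp only [smul_add, smul_smul]
    rw [show c₃ * a₁ = a₃ * c₁ from by linear_combination ea1,
      show c₃ * a₂ = a₃ * c₂ from by linear_combination ea2,
      show c₃ * a₃ = a₃ * c₃ from by ring]
  -- ξ s is a multiple of ξ t, so everything lies in the span of ξ t and ξ r
  have hxs2 : ξ s ∈ Submodule.span ℝ ({ξ t, ξ r} : Set (Fin (n + 3) → ℝ)) := by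
    have heq : ξ s = (c₃⁻¹ * a₃) • ξ t := by
      rw [mul_smul, ← hprop, inv_smul_smul₀ hc3]
    rw [heq]
    exact Submodule.smul_mem _ _ (Submodule.subset_span (by simp))
  have hsub : Submodule.span ℝ ({ξ s, ξ t, ξ r} : Set (Fin (n + 3) → ℝ)) ≤
      Submodule.span ℝ ({ξ t, ξ r} : Set (Fin (n + 3) → ℝ)) := by
    rw [Submodule.span_le]
    rintro x hx
    rcases hx with rfl | rfl | rfl
    · exact hxs2
    · exact Submodule.subset_span (by simp)
    · exact Submodule.subset_span (by simp)
  have hb1m : b₁ ∈ Submodule.span ℝ ({ξ t, ξ r} : Set (Fin (n + 3) → ℝ)) := by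
    apply hsub
    rw [hspan]; exact Submodule.subset_span (by simp)
  have hb2m : b₂ ∈ Submodule.span ℝ ({ξ t, ξ r} : Set (Fin (n + 3) → ℝ)) := by
    apply hsub
    rw [hspan]; exact Submodule.subset_span (by simp)
  obtain ⟨α₁, β₁, hb1e⟩ := Submodule.mem_span_pair.mp hb1m
  obtain ⟨α₂, β₂, hb2e⟩ := Submodule.mem_span_pair.mp hb2m
  have k1 : 2 * (α₁ * β₁) * bform n (ξ t) (ξ r) = 1 := by
    have expand : bform n b₁ b₁ = 2 * (α₁ * β₁) * bform n (ξ t) (ξ r) := by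
      rw [← hb1e]
      simp only [bform_add_left, bform_add_right, bform_smul_left, bform_smul_right,
        hiso, bform_comm n (ξ r) (ξ t)]
      ring
    rw [← expand]; exact g11
  have k2 : 2 * (α₂ * β₂) * bform n (ξ t) (ξ r) = 1 := by
    have expand : bform n b₂ b₂ = 2 * (α₂ * β₂) * bform n (ξ t) (ξ r) := by
      rw [← hb2e]
      simp only [bform_add_left, bform_add_right, bform_smul_left, bform_smul_right,
        hiso, bform_comm n (ξ r) (ξ t)]
      ring
    rw [← expand]; exact g22
  have k3 : (α₁ * β₂ + α₂ * β₁) * bform n (ξ t) (ξ r) = 0 := by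
    have expand : bform n b₁ b₂ = (α₁ * β₂ + α₂ * β₁) * bform n (ξ t) (ξ r) := by
      rw [← hb1e, ← hb2e]
      simp only [bform_add_left, bform_add_right, bform_smul_left, bform_smul_right,
        hiso, bform_comm n (ξ r) (ξ t)]
      ring
    rw [← expand]; exact g12
  set e : ℝ := bform n (ξ t) (ξ r) with he
  have hprod : (α₁ * β₂ * e) * (α₂ * β₁ * e) = 1 / 4 := by
    nlinarith [k1, k2]
  have hsum : α₁ * β₂ * e = -(α₂ * β₁ * e) := by linarith [k3, (by linear_combination k3 : α₁ * β₂ * e + α₂ * β₁ * e = 0)]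
  rw [hsum] at hprod
  nlinarith [sq_nonneg (α₂ * β₁ * e)]

/-- The triple products of the form are negative. -/
lemma T_neg (n : ℕ) (ξ : ℝ → (Fin (n + 3) → ℝ))
    (hiso : ∀ t, bform n (ξ t) (ξ t) = 0) (hne : ∀ t, ξ t ≠ 0)
    (hacausal : ∀ t₁ t₂ t₃ : ℝ, t₁ ≠ t₂ → t₁ ≠ t₃ → t₂ ≠ t₃ →
      SpanSig21 n (ξ t₁) (ξ t₂) (ξ t₃))
    (s t r : ℝ) (hst : s ≠ t) (hsr : s ≠ r) (htr : t ≠ r) :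
    bform n (ξ s) (ξ t) * bform n (ξ t) (ξ r) * bform n (ξ s) (ξ r) < 0 := by
  obtain ⟨b₁, b₂, b₃, hspan, g11, g22, g33, g12, g13, g23⟩ := hacausal s t r hst hsr htr
  have combo := bform_combo3 n b₁ b₂ b₃ g11 g22 g33 g12 g13 g23
  have hxs : ξ s ∈ Submodule.span ℝ ({b₁, b₂, b₃} : Set (Fin (n + 3) → ℝ)) := by
    rw [← hspan]; exact Submodule.subset_span (by simp)
  have hxt : ξ t ∈ Submodule.span ℝ ({b₁, b₂, b₃} : Set (Fin (n + 3) → ℝ)) := by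
    rw [← hspan]; exact Submodule.subset_span (by simp)
  have hxr : ξ r ∈ Submodule.span ℝ ({b₁, b₂, b₃} : Set (Fin (n + 3) → ℝ)) := by
    rw [← hspan]; exact Submodule.subset_span (by simp)
  obtain ⟨a₁, a₂, a₃, ha⟩ := mem_span_triple' hxs
  obtain ⟨c₁, c₂, c₃, hc⟩ := mem_span_triple' hxt
  obtain ⟨e₁, e₂, e₃, hee⟩ := mem_span_triple' hxr
  have hqa : a₁ ^ 2 + a₂ ^ 2 = a₃ ^ 2 := by
    have h := hiso s; rw [ha, combo] at h; linear_combination h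
  have hqc : c₁ ^ 2 + c₂ ^ 2 = c₃ ^ 2 := by
    have h := hiso t; rw [hc, combo] at h; linear_combination h
  have hqe : e₁ ^ 2 + e₂ ^ 2 = e₃ ^ 2 := by
    have h := hiso r; rw [hee, combo] at h; linear_combination h
  have fst : bform n (ξ s) (ξ t) = a₁ * c₁ + a₂ * c₂ - a₃ * c₃ := by rw [ha, hc, combo]
  have ftr : bform n (ξ t) (ξ r) = c₁ * e₁ + c₂ * e₂ - c₃ * e₃ := by rw [hc, hee, combo]
  have fsr : bform n (ξ s) (ξ r) = a₁ * e₁ + a₂ * e₂ - a₃ * e₃ := by rw [ha, hee, combo]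
  have hnst := f_ne n ξ hiso hne hacausal s t hst
  have hntr := f_ne n ξ hiso hne hacausal t r htr
  have hnsr := f_ne n ξ hiso hne hacausal s r hsr
  have key : ∀ x₁ x₂ x₃ y₁ y₂ y₃ F : ℝ, x₁ ^ 2 + x₂ ^ 2 = x₃ ^ 2 →
      y₁ ^ 2 + y₂ ^ 2 = y₃ ^ 2 → F = x₁ * y₁ + x₂ * y₂ - x₃ * y₃ → F ≠ 0 →
      F * (x₃ * y₃) < 0 := by
    intro x₁ x₂ x₃ y₁ y₂ y₃ F hx hy hF hF0
    have hCS : (x₁ * y₁ + x₂ * y₂) ^ 2 ≤ (x₃ * y₃) ^ 2 := by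
      nlinarith [sq_nonneg (x₁ * y₂ - x₂ * y₁)]
    have h1 : F * (F + 2 * (x₃ * y₃)) = (x₁ * y₁ + x₂ * y₂) ^ 2 - (x₃ * y₃) ^ 2 := by
      rw [hF]; ring
    have h2 : F * (F + 2 * (x₃ * y₃)) ≤ 0 := by rw [h1]; linarith [hCS]
    have hsq : 0 < F ^ 2 := lt_of_le_of_ne (sq_nonneg F) (Ne.symm (pow_ne_zero 2 hF0))
    nlinarith [h2, hsq]
  have m1 := key a₁ a₂ a₃ c₁ c₂ c₃ _ hqa hqc fst hnst
  have m2 := key c₁ c₂ c₃ e₁ e₂ e₃ _ hqc hqe ftr hntr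
  have m3 := key a₁ a₂ a₃ e₁ e₂ e₃ _ hqa hqe fsr hnsr
  have ha3 : a₃ ≠ 0 := by
    intro h
    have h1 : a₁ = 0 := by nlinarith [sq_nonneg a₁, sq_nonneg a₂]
    have h2 : a₂ = 0 := by nlinarith [sq_nonneg a₁, sq_nonneg a₂]
    apply hne s; rw [ha, h, h1, h2]; simp
  have hc3 : c₃ ≠ 0 := by
    intro h
    have h1 : c₁ = 0 := by nlinarith [sq_nonneg c₁, sq_nonneg c₂]
    have h2 : c₂ = 0 := by nlinarith [sq_nonneg c₁, sq_nonneg c₂]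
    apply hne t; rw [hc, h, h1, h2]; simp
  have he3 : e₃ ≠ 0 := by
    intro h
    have h1 : e₁ = 0 := by nlinarith [sq_nonneg e₁, sq_nonneg e₂]
    have h2 : e₂ = 0 := by nlinarith [sq_nonneg e₁, sq_nonneg e₂]
    apply hne r; rw [hee, h, h1, h2]; simp
  have hp : (bform n (ξ s) (ξ t) * (a₃ * c₃)) *
      ((bform n (ξ t) (ξ r) * (c₃ * e₃)) * (bform n (ξ s) (ξ r) * (a₃ * e₃))) < 0 :=
    mul_neg_of_neg_of_pos m1 (mul_pos_of_neg_of_neg m2 m3)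
  have heq : (bform n (ξ s) (ξ t) * (a₃ * c₃)) *
      ((bform n (ξ t) (ξ r) * (c₃ * e₃)) * (bform n (ξ s) (ξ r) * (a₃ * e₃))) =
      (bform n (ξ s) (ξ t) * bform n (ξ t) (ξ r) * bform n (ξ s) (ξ r)) *
        ((a₃ * c₃ * e₃) ^ 2) := by ring
  rw [heq] at hp
  have hsq : 0 < (a₃ * c₃ * e₃) ^ 2 :=
    lt_of_le_of_ne (sq_nonneg _) (Ne.symm (pow_ne_zero 2 (by
      exact mul_ne_zero (mul_ne_zero ha3 hc3) he3)))
  by_contra hcon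
  push_neg at hcon
  nlinarith [mul_nonneg hcon hsq.le]

/-- The form is negative on pairs of distinct points. -/
lemma f_neg (n : ℕ) (ξ : ℝ → (Fin (n + 3) → ℝ))
    (hcont : Continuous ξ)
    (hiso : ∀ t, bform n (ξ t) (ξ t) = 0) (hne : ∀ t, ξ t ≠ 0)
    (hacausal : ∀ t₁ t₂ t₃ : ℝ, t₁ ≠ t₂ → t₁ ≠ t₃ → t₂ ≠ t₃ →
      SpanSig21 n (ξ t₁) (ξ t₂) (ξ t₃))
    (s t : ℝ) (hst : s < t) : bform n (ξ s) (ξ t) < 0 := by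
  have hgc : Continuous fun p : ℝ × ℝ => bform n (ξ p.1) (ξ p.2) := by
    unfold bform
    apply continuous_finset_sum
    intro i _
    exact continuous_const.mul
      (((continuous_apply i).comp (hcont.comp continuous_fst)).mul
        ((continuous_apply i).comp (hcont.comp continuous_snd)))
  by_contra hge
  push_neg at hge
  have hpos : 0 < bform n (ξ s) (ξ t) :=
    lt_of_le_of_ne hge (Ne.symm (f_ne n ξ hiso hne hacausal s t (ne_of_lt hst)))
  set r : ℝ := t + 1 with hr
  have hT := T_neg n ξ hiso hne hacausal s t r (ne_of_lt hst)
    (ne_of_lt (by linarith)) (ne_of_lt (by linarith))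
  have hneg2 : bform n (ξ t) (ξ r) * bform n (ξ s) (ξ r) < 0 := by
    by_contra hP
    push_neg at hP
    nlinarith [mul_nonneg hpos.le hP]
  have hex : ∃ p q : ℝ, p < q ∧ bform n (ξ p) (ξ q) < 0 := by
    rcases mul_neg_iff.mp hneg2 with ⟨_, h⟩ | ⟨h, _⟩
    · exact ⟨s, r, by linarith, h⟩
    · exact ⟨t, r, by linarith, h⟩
  obtain ⟨p, q, hpq, hnegpq⟩ := hex
  set F : ℝ → ℝ := fun θ => bform n (ξ ((1 - θ) * s + θ * p)) (ξ ((1 - θ) * t + θ * q))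
    with hF
  have hFc : Continuous F := by
    have hpath : Continuous fun θ : ℝ => ((1 - θ) * s + θ * p, (1 - θ) * t + θ * q) :=
      Continuous.prodMk (by continuity) (by continuity)
    exact hgc.comp hpath
  have hF0 : F 0 = bform n (ξ s) (ξ t) := by simp [hF]
  have hF1 : F 1 = bform n (ξ p) (ξ q) := by simp [hF]
  have hmem : (0 : ℝ) ∈ Set.Icc (F 1) (F 0) := by
    constructor
    · rw [hF1]; exact hnegpq.le
    · rw [hF0]; exact hpos.le
  obtain ⟨θ, hθmem, hFθ⟩ := intermediate_value_Icc' (by norm_num : (0:ℝ) ≤ 1)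
    hFc.continuousOn hmem
  have h0 : (0:ℝ) ≤ θ := hθmem.1
  have h1 : θ ≤ 1 := hθmem.2
  have hlt : (1 - θ) * s + θ * p < (1 - θ) * t + θ * q := by
    rcases le_total (t - s) (q - p) with hle | hle
    · nlinarith [mul_nonneg h0 (by linarith : (0:ℝ) ≤ (q - p) - (t - s))]
    · nlinarith [mul_nonneg (by linarith : (0:ℝ) ≤ 1 - θ) (by linarith : (0:ℝ) ≤ (t - s) - (q - p))]
  exact f_ne n ξ hiso hne hacausal _ _ (ne_of_lt hlt) hFθ

end Aux

/-- Strict positivity of the cross ratio of a maximal representation: if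
`ξ : ∂Γ → ∂ℍ^{2,n}` is a continuous injective acausal limit map (every triple of distinct
points is sent to isotropic rays spanning a subspace of signature `(2,1)`), then for every
4-tuple of distinct cyclically ordered points `u, v, w, z` one has `β^ρ(u,v,w,z) > 1`. -/
theorem stmt13 (n : ℕ) (ξ : ℝ → (Fin (n + 3) → ℝ))
    (hcont : Continuous ξ) (hinj : Function.Injective ξ)
    (hiso : ∀ t, bform n (ξ t) (ξ t) = 0) (hne : ∀ t, ξ t ≠ 0)
    (hacausal : ∀ t₁ t₂ t₃ : ℝ, t₁ ≠ t₂ → t₁ ≠ t₃ → t₂ ≠ t₃ →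
      SpanSig21 n (ξ t₁) (ξ t₂) (ξ t₃))
    (u v w z : ℝ) (huv : u < v) (hvw : v < w) (hwz : w < z) :
    1 < betaRho n ξ u v w z := by
  have fneg := f_neg n ξ hcont hiso hne hacausal
  have huv' : bform n (ξ u) (ξ v) < 0 := fneg u v huv
  have huw' : bform n (ξ u) (ξ w) < 0 := fneg u w (by linarith)
  have huz' : bform n (ξ u) (ξ z) < 0 := fneg u z (by linarith)
  have hvw' : bform n (ξ v) (ξ w) < 0 := fneg v w hvw
  have hvz' : bform n (ξ v) (ξ z) < 0 := fneg v z (by linarith)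
  have hwz' : bform n (ξ w) (ξ z) < 0 := fneg w z hwz
  set A : ℝ := bform n (ξ v) (ξ z) with hA
  set B : ℝ := bform n (ξ u) (ξ z) with hB
  set η : Fin (n + 3) → ℝ := A • ξ u - B • ξ v with hη
  have hqη : bform n η η = -2 * (A * B * bform n (ξ u) (ξ v)) := by
    rw [hη]
    simp only [bform_sub_left, bform_sub_right, bform_smul_left, bform_smul_right,
      hiso, bform_comm n (ξ v) (ξ u)]
    ring
  have hqη_pos : 0 < bform n η η := by
    rw [hqη]
    have h1 : 0 < A * B := mul_pos_of_neg_of_neg hvz' huz'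
    nlinarith [mul_pos h1 (show 0 < -(bform n (ξ u) (ξ v)) from by linarith)]
  set χ : ℝ → ℝ := fun x => bform n η (ξ x) with hχ
  have hχval : ∀ x, χ x = A * bform n (ξ u) (ξ x) - B * bform n (ξ v) (ξ x) := by
    intro x
    rw [hχ]
    simp only [hη, bform_sub_left, bform_smul_left]
  have hχc : Continuous χ := by
    have hb : Continuous fun y : Fin (n + 3) → ℝ => bform n η y := by
      unfold bform
      apply continuous_finset_sum
      intro i _
      exact continuous_const.mul (continuous_const.mul (continuous_apply i))
    exact hb.comp hcont
  have hχu : χ u < 0 := by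
    rw [hχval u, hiso u, bform_comm n (ξ v) (ξ u)]
    nlinarith [mul_pos_of_neg_of_neg huz' huv']
  have hχv : 0 < χ v := by
    rw [hχval v, hiso v]
    nlinarith [mul_pos_of_neg_of_neg hvz' huv']
  have hχz : χ z = 0 := by
    rw [hχval z, ← hA, ← hB]; ring
  obtain ⟨r, hrmem, hχr⟩ := intermediate_value_Ioo (le_of_lt huv) hχc.continuousOn
    (show (0 : ℝ) ∈ Set.Ioo (χ u) (χ v) from ⟨hχu, hχv⟩)
  have hrz : r < z := by have := hrmem.2; linarith
  have hnz : ∀ x ∈ Set.Ioo r z, χ x ≠ 0 := by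
    intro x hx h0
    exact no_three_zeros n ξ hacausal η hqη_pos r x z (ne_of_lt hx.1)
      (ne_of_lt hrz) (ne_of_lt hx.2) hχr h0 hχz
  have hwmem : w ∈ Set.Ioo r z := ⟨by have := hrmem.2; linarith, hwz⟩
  have hχw : 0 < χ w := by
    rcases lt_trichotomy (χ w) 0 with h | h | h
    · exfalso
      obtain ⟨x, hxmem, hx0⟩ := intermediate_value_Ioo' (le_of_lt hvw)
        hχc.continuousOn (show (0 : ℝ) ∈ Set.Ioo (χ w) (χ v) from ⟨h, hχv⟩)
      exact hnz x ⟨by have := hrmem.2; have := hxmem.1; linarith,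
        by have := hxmem.2; linarith⟩ hx0
    · exact absurd h (hnz w hwmem)
    · exact h
  have hD : bform n (ξ u) (ξ z) * bform n (ξ v) (ξ w) <
      bform n (ξ u) (ξ w) * bform n (ξ v) (ξ z) := by
    have := hχval w
    rw [this] at hχw
    rw [← hA, ← hB]
    nlinarith [hχw]
  have hP3 : 0 < bform n (ξ u) (ξ z) * bform n (ξ v) (ξ w) :=
    mul_pos_of_neg_of_neg huz' hvw'
  have hratio : 1 < (bform n (ξ u) (ξ w) * bform n (ξ v) (ξ z)) /
      (bform n (ξ u) (ξ z) * bform n (ξ v) (ξ w)) := by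
    rw [lt_div_iff₀ hP3, one_mul]
    exact hD
  have hsign : Real.sign (((u - w) * (v - z)) / ((u - z) * (v - w))) = 1 := by
    apply Real.sign_of_pos
    apply div_pos
    · exact mul_pos_of_neg_of_neg (by linarith) (by linarith)
    · exact mul_pos_of_neg_of_neg (by linarith) (by linarith)
  unfold betaRho
  rw [hsign, one_mul]
  calc (1 : ℝ) = Real.sqrt 1 := Real.sqrt_one.symm
    _ < _ := Real.sqrt_lt_sqrt zero_le_one hratio
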